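/- Let d > 6 be an integer. For every ε > 0 there exist K ≥ 1 and a constant C = C(d) > 0 such that for every real α ∈ (0, 1/3), every integer r ≥ 1, and every v ∈ ℤ^d with |v| ≥ K, one has ∑_{x ∈ B_{αr}} ∑_{y ∈ B_{αr}} ∑_{z ∈ B_{α²r}} |x|^{2−d} |y − x|^{2−d} |x − z|^{2−d} |z + v − y|^{2−d} (r − |y|)^{−2} ≤ C α² ε, where terms in which any of x, y − x, x − z, z + v − y vanishes are omitted from the sum; here r − |y| ≥ (2/3) r > 0 for y ∈ B_{αr}, and r − |y| equals the ℓ^∞ distance from y to ∂B_r = {x ∈ ℤ^d : |x| = r}. -/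

import Mathlib

open scoped ENNReal

/-- The power `|x|^a` (ℓ^∞ norm of a lattice point, real exponent), valued in `[0,∞]`,
with the convention that the term is omitted (set to `0`) when the base vanishes. -/
noncomputable def latPow {d : ℕ} (x : Fin d → ℤ) (a : ℝ) : ℝ≥0∞ :=
  if x = 0 then 0 else ENNReal.ofReal (‖x‖ ^ a)

/-!
Write `⟨x⟩ = max ‖x‖ 1`. Since `‖y‖ ≤ r / 3`, the boundary factor is at most `(2r/3)^(-2)`, and
the sums over `y` and `z` may then be extended to all of `ℤ^d`. Two applications of the lattice
convolution estimate `∑_w ⟨w⟩^a ⟨v - w⟩^b ≤ C ⟨v⟩^(d+a+b)` (valid for `a, b > -d`, `a + b < -d`)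
bound them by `C ⟨v⟩^(6-d)`, which is small once `‖v‖` is large because `d > 6`. What remains,
`∑_{‖x‖ ≤ αr} ‖x‖^(2-d) ≤ C (αr)^2`, cancels `r^(-2)` and leaves `α^2`. The convolution estimate
follows by splitting according to which of `w`, `v - w` is shorter and summing `⟨w⟩^a` over
dyadic shells `2^k ≤ ⟨w⟩ < 2^(k+1)`, each holding at most `C 2^(kd)` lattice points.
-/

open Finset

section Bracket

variable {d : ℕ}

/-- The regularized norm `⟨x⟩`; unlike those of `‖x‖`, its powers need no special case at `0`. -/
def bracket (x : Fin d → ℤ) : ℝ := max ‖x‖ 1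

noncomputable def bracketPow (x : Fin d → ℤ) (a : ℝ) : ℝ≥0∞ :=
  ENNReal.ofReal (bracket x ^ a)

lemma le_bracket (x : Fin d → ℤ) : ‖x‖ ≤ bracket x := le_max_left _ _

lemma one_le_bracket (x : Fin d → ℤ) : 1 ≤ bracket x := le_max_right _ _

lemma bracket_pos (x : Fin d → ℤ) : 0 < bracket x := one_pos.trans_le (one_le_bracket x)

lemma bracket_sub_comm (x y : Fin d → ℤ) : bracket (x - y) = bracket (y - x) := by
  rw [bracket, bracket, norm_sub_rev]

lemma bracketPow_sub_comm (x y : Fin d → ℤ) (a : ℝ) :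
    bracketPow (x - y) a = bracketPow (y - x) a := by
  rw [bracketPow, bracketPow, bracket_sub_comm]

lemma bracketPow_mul_bracketPow (x : Fin d → ℤ) (a b : ℝ) :
    bracketPow x a * bracketPow x b = bracketPow x (a + b) := by
  rw [bracketPow, bracketPow, bracketPow, ← ENNReal.ofReal_mul (by positivity [bracket_pos x]),
    Real.rpow_add (bracket_pos x)]

lemma bracketPow_le_of_le {a t : ℝ} (ha : a ≤ 0) (ht : 0 < t) {x : Fin d → ℤ}
    (h : t ≤ bracket x) : bracketPow x a ≤ ENNReal.ofReal (t ^ a) :=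
  ENNReal.ofReal_le_ofReal (Real.rpow_le_rpow_of_nonpos ht h ha)

lemma one_le_norm_of_ne_zero {x : Fin d → ℤ} (hx : x ≠ 0) : 1 ≤ ‖x‖ := by
  obtain ⟨i, hi⟩ := Function.ne_iff.1 hx
  calc (1 : ℝ) ≤ ‖x i‖ := by
        rw [Int.norm_eq_abs]; exact_mod_cast Int.one_le_abs hi
    _ ≤ ‖x‖ := norm_le_pi_norm x i

lemma latPow_le_bracketPow (x : Fin d → ℤ) (a : ℝ) : latPow x a ≤ bracketPow x a := by
  unfold latPow
  split_ifs with hx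
  · exact zero_le
  · rw [bracketPow, bracket, max_eq_left (one_le_norm_of_ne_zero hx)]

end Bracket

section Counting

variable {d : ℕ}

lemma tsum_le_of_eq_zero_outside_box {g : (Fin d → ℤ) → ℝ≥0∞} {R : ℝ} {c : ℝ≥0∞} (hR : 0 ≤ R)
    (hg : ∀ x, g x ≤ c) (hsupp : ∀ x, R < ‖x‖ → g x = 0) :
    ∑' x, g x ≤ ENNReal.ofReal ((2 * R + 1) ^ d) * c := by
  set m := ⌊R⌋₊
  set s := Fintype.piFinset fun _ : Fin d => Icc (-(m : ℤ)) m
  have hs : ∀ x ∉ s, g x = 0 := by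
    intro x hx
    refine hsupp x ?_
    obtain ⟨i, hi⟩ : ∃ i, x i ∉ Icc (-(m : ℤ)) m := by simpa [s] using hx
    have hm : (m : ℤ) < |x i| := by rw [mem_Icc] at hi; rw [lt_abs]; omega
    calc R < m + 1 := Nat.lt_floor_add_one R
      _ ≤ ‖x i‖ := by rw [Int.norm_eq_abs]; exact_mod_cast Int.add_one_le_of_lt hm
      _ ≤ ‖x‖ := norm_le_pi_norm x i
  have hcard : (#s : ℝ) ≤ (2 * R + 1) ^ d := by
    have : #s = (2 * m + 1) ^ d := by
      simp only [s, Fintype.card_piFinset, Int.card_Icc, prod_const, card_univ, Fintype.card_fin]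
      congr 1; omega
    rw [this]; push_cast
    gcongr
    exact Nat.floor_le hR
  rw [tsum_eq_sum hs]
  calc ∑ x ∈ s, g x ≤ #s • c := sum_le_card_nsmul _ _ _ fun x _ => hg x
    _ = ENNReal.ofReal (#s) * c := by rw [nsmul_eq_mul, ENNReal.ofReal_natCast]
    _ ≤ _ := by gcongr

end Counting

section Dyadic

noncomputable def dyadicIndex (t : ℝ) : ℕ := Nat.log 2 ⌊t⌋₊

lemma dyadicIndex_mono : Monotone dyadicIndex :=
  fun _ _ h => Nat.log_mono_right (Nat.floor_mono h)

lemma two_pow_dyadicIndex_le {t : ℝ} (ht : 1 ≤ t) : (2 : ℝ) ^ dyadicIndex t ≤ t := by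
  have h : 2 ^ dyadicIndex t ≤ ⌊t⌋₊ :=
    Nat.pow_log_le_self 2 (Nat.one_le_iff_ne_zero.1 ((Nat.one_le_floor_iff t).2 ht))
  calc (2 : ℝ) ^ dyadicIndex t ≤ ⌊t⌋₊ := by exact_mod_cast h
    _ ≤ t := Nat.floor_le (by linarith)

lemma lt_two_pow_dyadicIndex_succ (t : ℝ) : t < 2 ^ (dyadicIndex t + 1) := by
  have h : ⌊t⌋₊ < 2 ^ (dyadicIndex t + 1) := Nat.lt_pow_succ_log_self one_lt_two _
  calc t < ⌊t⌋₊ + 1 := Nat.lt_floor_add_one t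
    _ ≤ 2 ^ (dyadicIndex t + 1) := by exact_mod_cast h

lemma geom_sum_range_succ_le {ρ : ℝ} (hρ : 1 < ρ) (n : ℕ) :
    ∑ k ∈ range (n + 1), ρ ^ k ≤ ρ / (ρ - 1) * ρ ^ n := by
  have hρ' : 0 < ρ - 1 := sub_pos.2 hρ
  rw [geom_sum_eq hρ.ne', div_mul_eq_mul_div, ← pow_succ']
  gcongr
  linarith

end Dyadic

section DyadicSums

variable {d : ℕ}

def dyadicShell (k : ℕ) : Set (Fin d → ℤ) := {x | dyadicIndex (bracket x) = k}

lemma tsum_indicator_dyadicShell_le {a : ℝ} (ha : a ≤ 0) (k : ℕ) :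
    ∑' x : Fin d → ℤ, (dyadicShell k).indicator (bracketPow · a) x ≤
      ENNReal.ofReal (5 ^ d * ((2 : ℝ) ^ (d + a)) ^ k) := by
  have h2k : (0 : ℝ) < 2 ^ k := by positivity
  refine (tsum_le_of_eq_zero_outside_box (R := 2 ^ (k + 1)) (c := ENNReal.ofReal ((2 ^ k) ^ a))
    (by positivity) (fun x => ?_) (fun x hx => ?_)).trans ?_
  · refine Set.indicator_apply_le' (fun hx => ?_) (fun _ => zero_le)
    exact bracketPow_le_of_le ha h2k (hx ▸ two_pow_dyadicIndex_le (one_le_bracket x))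
  · refine Set.indicator_of_notMem (fun hk => hx.not_ge ?_) _
    rw [← hk]
    exact (le_bracket x).trans (lt_two_pow_dyadicIndex_succ _).le
  · rw [← ENNReal.ofReal_mul (by positivity)]
    refine ENNReal.ofReal_le_ofReal ?_
    calc (2 * 2 ^ (k + 1) + 1 : ℝ) ^ d * (2 ^ k) ^ a ≤ (5 * 2 ^ k) ^ d * (2 ^ k) ^ a := by
          gcongr; linarith [one_le_pow₀ (M₀ := ℝ) (n := k) one_le_two, pow_succ (2 : ℝ) k]
      _ = 5 ^ d * ((2 : ℝ) ^ k) ^ (d + a) := by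
          rw [mul_pow, ← Real.rpow_natCast ((2 : ℝ) ^ k) d, Real.rpow_add h2k, mul_assoc]
      _ = 5 ^ d * ((2 : ℝ) ^ (d + a)) ^ k := by rw [Real.rpow_pow_comm zero_le_two]

lemma exists_tsum_bracketPow_ball_le {a : ℝ} (ha : a ≤ 0) (hda : 0 < d + a) :
    ∃ C > 0, ∀ R : ℝ, 1 ≤ R →
      ∑' x : Fin d → ℤ, {x | bracket x ≤ R}.indicator (bracketPow · a) x ≤
        ENNReal.ofReal (C * R ^ (d + a)) := by
  set ρ : ℝ := 2 ^ (d + a)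
  have hρ : 1 < ρ := Real.one_lt_rpow one_lt_two hda
  refine ⟨5 ^ d * (ρ / (ρ - 1)), by have := sub_pos.2 hρ; positivity, fun R hR => ?_⟩
  set K := dyadicIndex R
  have hpt : ∀ x : Fin d → ℤ, {x | bracket x ≤ R}.indicator (bracketPow · a) x ≤
      ∑ k ∈ range (K + 1), (dyadicShell k).indicator (bracketPow · a) x := by
    refine fun x => Set.indicator_apply_le' (fun hx => ?_) (fun _ => zero_le)
    have hk : dyadicIndex (bracket x) ∈ range (K + 1) :=
      mem_range_succ_iff.2 (dyadicIndex_mono hx)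
    refine le_of_eq_of_le ?_ (single_le_sum (fun k _ => zero_le) hk)
    exact (Set.indicator_of_mem (show x ∈ dyadicShell _ from rfl) (bracketPow · a)).symm
  calc ∑' x, {x | bracket x ≤ R}.indicator (bracketPow · a) x
      ≤ ∑' x, ∑ k ∈ range (K + 1), (dyadicShell k).indicator (bracketPow · a) x :=
        ENNReal.tsum_le_tsum hpt
    _ = ∑ k ∈ range (K + 1), ∑' x, (dyadicShell k).indicator (bracketPow · a) x :=
        Summable.tsum_finsetSum fun _ _ => ENNReal.summable
    _ ≤ ∑ k ∈ range (K + 1), ENNReal.ofReal (5 ^ d * ρ ^ k) :=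
        sum_le_sum fun k _ => tsum_indicator_dyadicShell_le ha k
    _ = ENNReal.ofReal (5 ^ d * ∑ k ∈ range (K + 1), ρ ^ k) := by
        rw [mul_sum, ENNReal.ofReal_sum_of_nonneg fun k _ => by positivity]
    _ ≤ ENNReal.ofReal (5 ^ d * (ρ / (ρ - 1)) * R ^ (d + a)) := by
        refine ENNReal.ofReal_le_ofReal ?_
        have hKR : ρ ^ K ≤ R ^ (d + a) := by
          calc ρ ^ K = ((2 : ℝ) ^ K) ^ (d + a) := Real.rpow_pow_comm zero_le_two _ _
            _ ≤ R ^ (d + a) :=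
                Real.rpow_le_rpow (by positivity) (two_pow_dyadicIndex_le hR) hda.le
        have := sub_pos.2 hρ
        calc 5 ^ d * ∑ k ∈ range (K + 1), ρ ^ k ≤ 5 ^ d * (ρ / (ρ - 1) * ρ ^ K) := by
              gcongr; exact geom_sum_range_succ_le hρ K
          _ ≤ _ := by rw [mul_assoc]; gcongr

lemma exists_tsum_bracketPow_tail_le {a : ℝ} (hda : d + a < 0) :
    ∃ C > 0, ∀ R : ℝ, 1 ≤ R →
      ∑' x : Fin d → ℤ, {x | R ≤ bracket x}.indicator (bracketPow · a) x ≤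
        ENNReal.ofReal (C * R ^ (d + a)) := by
  have ha : a ≤ 0 := by linarith [Nat.cast_nonneg (α := ℝ) d]
  set ρ : ℝ := 2 ^ (d + a)
  have hρ0 : 0 < ρ := by positivity
  have hρ1 : ρ < 1 := Real.rpow_lt_one_of_one_lt_of_neg one_lt_two hda
  refine ⟨5 ^ d * (1 - ρ)⁻¹ * ρ⁻¹, by have := sub_pos.2 hρ1; positivity, fun R hR => ?_⟩
  set K := dyadicIndex R
  have hpt : ∀ x : Fin d → ℤ, {x | R ≤ bracket x}.indicator (bracketPow · a) x ≤
      ∑' j, (dyadicShell (K + j)).indicator (bracketPow · a) x := by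
    refine fun x => Set.indicator_apply_le' (fun hx => ?_) (fun _ => zero_le)
    have hj : K + (dyadicIndex (bracket x) - K) = dyadicIndex (bracket x) :=
      Nat.add_sub_cancel' (dyadicIndex_mono hx)
    refine le_of_eq_of_le ?_ (ENNReal.le_tsum (dyadicIndex (bracket x) - K))
    exact (Set.indicator_of_mem (show x ∈ dyadicShell _ from hj.symm) (bracketPow · a)).symm
  have hsum : Summable fun j : ℕ => 5 ^ d * ρ ^ K * ρ ^ j :=
    (summable_geometric_of_lt_one hρ0.le hρ1).mul_left _
  calc ∑' x, {x | R ≤ bracket x}.indicator (bracketPow · a) x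
      ≤ ∑' x, ∑' j, (dyadicShell (K + j)).indicator (bracketPow · a) x :=
        ENNReal.tsum_le_tsum hpt
    _ = ∑' j, ∑' x, (dyadicShell (K + j)).indicator (bracketPow · a) x := ENNReal.tsum_comm
    _ ≤ ∑' j, ENNReal.ofReal (5 ^ d * ρ ^ K * ρ ^ j) := by
        refine ENNReal.tsum_le_tsum fun j => ?_
        rw [mul_assoc, ← pow_add]
        exact tsum_indicator_dyadicShell_le ha (K + j)
    _ = ENNReal.ofReal (5 ^ d * ρ ^ K * (1 - ρ)⁻¹) := by
        rw [← ENNReal.ofReal_tsum_of_nonneg (fun j => by positivity) hsum, tsum_mul_left,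
          tsum_geometric_of_lt_one hρ0.le hρ1]
    _ ≤ ENNReal.ofReal (5 ^ d * (1 - ρ)⁻¹ * ρ⁻¹ * R ^ (d + a)) := by
        refine ENNReal.ofReal_le_ofReal ?_
        have hKR : ρ ^ K ≤ ρ⁻¹ * R ^ (d + a) := by
          have hR2 : R / 2 ≤ 2 ^ K := by
            linarith [lt_two_pow_dyadicIndex_succ R, pow_succ (2 : ℝ) K]
          calc ρ ^ K = ((2 : ℝ) ^ K) ^ (d + a) := Real.rpow_pow_comm zero_le_two _ _
            _ ≤ (R / 2) ^ (d + a) := Real.rpow_le_rpow_of_nonpos (by positivity) hR2 hda.le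
            _ = ρ⁻¹ * R ^ (d + a) := by
                rw [Real.div_rpow (by linarith) zero_le_two, div_eq_inv_mul]
        have := sub_pos.2 hρ1
        calc 5 ^ d * ρ ^ K * (1 - ρ)⁻¹ ≤ 5 ^ d * (ρ⁻¹ * R ^ (d + a)) * (1 - ρ)⁻¹ := by gcongr
          _ = _ := by ring

end DyadicSums

section Convolution

variable {d : ℕ}

lemma bracket_le_two_mul_bracket_sub {v w : Fin d → ℤ} (h : ‖w‖ ≤ ‖v - w‖) :
    bracket v ≤ 2 * bracket (v - w) := by
  have hv : ‖v‖ ≤ ‖w‖ + ‖v - w‖ := by simpa using norm_add_le w (v - w)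
  exact max_le (by linarith [le_bracket (v - w)]) (by linarith [one_le_bracket (v - w)])

lemma exists_tsum_bracketPow_mul_near_le {a b : ℝ} (ha : a ≤ 0) (hda : 0 < d + a)
    (hdab : d + a + b < 0) :
    ∃ C > 0, ∀ v : Fin d → ℤ, ∑' w : Fin d → ℤ,
      {w | ‖w‖ ≤ ‖v - w‖}.indicator (fun w => bracketPow w a * bracketPow (v - w) b) w ≤
        ENNReal.ofReal (C * bracket v ^ (d + a + b)) := by
  have hb : b ≤ 0 := by linarith
  obtain ⟨C₁, hC₁, hball⟩ := exists_tsum_bracketPow_ball_le (d := d) ha hda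
  obtain ⟨C₂, hC₂, htail⟩ := exists_tsum_bracketPow_tail_le (d := d) (a := a + b) (by linarith)
  refine ⟨2 ^ (-b) * C₁ + C₂, by positivity, fun v => ?_⟩
  set t := bracket v
  have ht : 0 < t := bracket_pos v
  have hpt : ∀ w,
      {w | ‖w‖ ≤ ‖v - w‖}.indicator (fun w => bracketPow w a * bracketPow (v - w) b) w ≤
        {w | bracket w ≤ t}.indicator (bracketPow · a) w * ENNReal.ofReal ((t / 2) ^ b) +
          {w | t ≤ bracket w}.indicator (bracketPow · (a + b)) w := by
    refine fun w => Set.indicator_apply_le' (fun hw => ?_) (fun _ => zero_le)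
    rcases le_total (bracket w) t with hwt | htw
    · refine le_add_right ?_
      rw [Set.indicator_of_mem (show w ∈ {w | bracket w ≤ t} from hwt)]
      gcongr
      exact bracketPow_le_of_le hb (by positivity)
        (by linarith [bracket_le_two_mul_bracket_sub hw])
    · refine le_add_left ?_
      rw [Set.indicator_of_mem (show w ∈ {w | t ≤ bracket w} from htw),
        ← bracketPow_mul_bracketPow]
      gcongr
      exact bracketPow_le_of_le hb (bracket_pos w) (max_le_max_right 1 hw)
  calc _ ≤ ∑' w, ({w | bracket w ≤ t}.indicator (bracketPow · a) w *
          ENNReal.ofReal ((t / 2) ^ b) + {w | t ≤ bracket w}.indicator (bracketPow · (a + b)) w) :=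
        ENNReal.tsum_le_tsum hpt
    _ = (∑' w, {w | bracket w ≤ t}.indicator (bracketPow · a) w) * ENNReal.ofReal ((t / 2) ^ b) +
          ∑' w, {w | t ≤ bracket w}.indicator (bracketPow · (a + b)) w := by
      rw [ENNReal.tsum_add, ENNReal.tsum_mul_right]
    _ ≤ ENNReal.ofReal (C₁ * t ^ (d + a)) * ENNReal.ofReal ((t / 2) ^ b) +
        ENNReal.ofReal (C₂ * t ^ (d + (a + b))) := by
      gcongr
      exacts [hball t (one_le_bracket v), htail t (one_le_bracket v)]
    _ = ENNReal.ofReal ((2 ^ (-b) * C₁ + C₂) * t ^ (d + a + b)) := by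
      rw [← ENNReal.ofReal_mul (by positivity),
        ← ENNReal.ofReal_add (by positivity) (by positivity)]
      congr 1
      rw [← add_assoc, Real.rpow_add ht (d + a) b, Real.div_rpow ht.le zero_le_two,
        Real.rpow_neg zero_le_two]
      ring

lemma exists_tsum_bracketPow_mul_le {a b : ℝ} (hda : 0 < d + a) (hdb : 0 < d + b)
    (hdab : d + a + b < 0) :
    ∃ C > 0, ∀ p q : Fin d → ℤ, ∑' y, bracketPow (y - p) a * bracketPow (q - y) b ≤
      ENNReal.ofReal C * bracketPow (q - p) (d + a + b) := by
  obtain ⟨C₁, hC₁, hab⟩ := exists_tsum_bracketPow_mul_near_le (d := d) (by linarith) hda hdab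
  obtain ⟨C₂, hC₂, hba⟩ :=
    exists_tsum_bracketPow_mul_near_le (d := d) (b := a) (by linarith) hdb (by linarith)
  refine ⟨C₁ + C₂, by positivity, fun p q => ?_⟩
  set v := q - p
  set f := fun w => bracketPow w a * bracketPow (v - w) b
  have htrans : ∑' y, bracketPow (y - p) a * bracketPow (q - y) b = ∑' w, f w := by
    rw [← (Equiv.subRight p).tsum_eq f]
    simp [f, v, sub_sub_sub_cancel_right]
  have hrefl : ∑' w, {w | ‖v - w‖ ≤ ‖w‖}.indicator f w = ∑' w,
      {w | ‖w‖ ≤ ‖v - w‖}.indicator (fun w => bracketPow w b * bracketPow (v - w) a) w := by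
    rw [← (Equiv.subLeft v).tsum_eq]
    simp [f, Set.indicator_apply, mul_comm]
  have hpt : ∀ w,
      f w ≤ {w | ‖w‖ ≤ ‖v - w‖}.indicator f w + {w | ‖v - w‖ ≤ ‖w‖}.indicator f w := by
    intro w
    rcases le_total ‖w‖ ‖v - w‖ with h | h
    · exact (Set.indicator_of_mem (show w ∈ {w | ‖w‖ ≤ ‖v - w‖} from h) f).ge.trans le_self_add
    · exact (Set.indicator_of_mem (show w ∈ {w | ‖v - w‖ ≤ ‖w‖} from h) f).ge.trans le_add_self
  calc _ = ∑' w, f w := htrans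
    _ ≤ ∑' w, {w | ‖w‖ ≤ ‖v - w‖}.indicator f w + ∑' w, {w | ‖v - w‖ ≤ ‖w‖}.indicator f w :=
      (ENNReal.tsum_le_tsum hpt).trans_eq ENNReal.tsum_add
    _ ≤ ENNReal.ofReal (C₁ * bracket v ^ (d + a + b)) +
        ENNReal.ofReal (C₂ * bracket v ^ (d + b + a)) := by
      rw [hrefl]; exact add_le_add (hab v) (hba v)
    _ = ENNReal.ofReal (C₁ + C₂) * bracketPow v (d + a + b) := by
      have := bracket_pos v
      rw [bracketPow, ← ENNReal.ofReal_mul (by positivity),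
        ← ENNReal.ofReal_add (by positivity) (by positivity), add_right_comm _ b]
      ring_nf

end Convolution

section Assembly

variable {d : ℕ}

lemma exists_tsum_tsum_latPow_triangle_le {a b c : ℝ} (hda : 0 < d + a) (hdb : 0 < d + b)
    (hdc : 0 < d + c) (habc : 2 * d + a + b + c < 0) :
    ∃ C > 0, ∀ x v : Fin d → ℤ,
      ∑' y, ∑' z, latPow (y - x) a * latPow (x - z) b * latPow (z + v - y) c ≤
        ENNReal.ofReal C * bracketPow v (2 * d + a + b + c) := by
  obtain ⟨C₁, hC₁, hbc⟩ := exists_tsum_bracketPow_mul_le (d := d) hdb hdc (by linarith)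
  obtain ⟨C₂, hC₂, habc'⟩ := exists_tsum_bracketPow_mul_le (d := d) (b := d + b + c) hda
    (by linarith) (by linarith)
  refine ⟨C₁ * C₂, by positivity, fun x v => ?_⟩
  have hpt : ∀ y z : Fin d → ℤ, latPow (y - x) a * latPow (x - z) b * latPow (z + v - y) c ≤
      bracketPow (y - x) a * (bracketPow (z - x) b * bracketPow (y - v - z) c) := by
    intro y z
    rw [← mul_assoc, bracketPow_sub_comm z, bracketPow_sub_comm (y - v), sub_sub_eq_add_sub]
    gcongr <;> exact latPow_le_bracketPow _ _
  calc _ ≤ ∑' y, bracketPow (y - x) a *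
          ∑' z, bracketPow (z - x) b * bracketPow (y - v - z) c := by
        simp_rw [← ENNReal.tsum_mul_left]
        exact ENNReal.tsum_le_tsum fun y => ENNReal.tsum_le_tsum (hpt y)
    _ ≤ ∑' y, bracketPow (y - x) a *
          (ENNReal.ofReal C₁ * bracketPow (v + x - y) (d + b + c)) :=
        ENNReal.tsum_le_tsum fun y => by
          gcongr
          exact (hbc x (y - v)).trans_eq (by rw [sub_sub, bracketPow_sub_comm])
    _ = ENNReal.ofReal C₁ *
          ∑' y, bracketPow (y - x) a * bracketPow (v + x - y) (d + b + c) := by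
        simp_rw [← ENNReal.tsum_mul_left, mul_left_comm]
    _ ≤ ENNReal.ofReal C₁ * (ENNReal.ofReal C₂ * bracketPow v (2 * d + a + b + c)) := by
        gcongr
        have h := habc' x (v + x)
        rwa [add_sub_cancel_right,
          show (d : ℝ) + a + (d + b + c) = 2 * d + a + b + c by ring] at h
    _ = _ := by rw [ENNReal.ofReal_mul hC₁.le, mul_assoc]

lemma exists_tsum_latPow_ball_le {s : ℝ} (hs : 0 < s) (hsd : s ≤ d) :
    ∃ C > 0, ∀ R : ℝ,
      ∑' x : {x : Fin d → ℤ // ‖x‖ ≤ R}, latPow x.1 (s - d) ≤ ENNReal.ofReal (C * R ^ s) := by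
  obtain ⟨C, hC, hball⟩ := exists_tsum_bracketPow_ball_le (d := d) (a := s - d) (by linarith)
    (by linarith)
  refine ⟨C, hC, fun R => ?_⟩
  rcases lt_or_ge R 1 with hR | hR
  · refine le_of_eq_of_le (ENNReal.tsum_eq_zero.2 fun x => ?_) zero_le
    have hx : x.1 = 0 := by
      by_contra hx
      linarith [one_le_norm_of_ne_zero hx, x.2]
    simp [latPow, hx]
  · calc _ ≤ ∑' x : {x : Fin d → ℤ // ‖x‖ ≤ R},
          {x | bracket x ≤ R}.indicator (bracketPow · (s - d)) x.1 :=
        ENNReal.tsum_le_tsum fun x => (latPow_le_bracketPow _ _).trans_eq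
          (Set.indicator_of_mem (show x.1 ∈ {x | bracket x ≤ R} from max_le x.2 hR)
            (bracketPow · (s - d))).symm
      _ ≤ _ := ENNReal.tsum_comp_le_tsum_of_injective Subtype.val_injective _
      _ ≤ _ := by simpa only [add_sub_cancel] using hball R hR

lemma tsum_subtype_tsum_subtype_le {α β : Type*} {P : α → Prop} {Q : β → Prop}
    (f : α → β → ℝ≥0∞) : ∑' y : {y // P y}, ∑' z : {z // Q z}, f y z ≤ ∑' y, ∑' z, f y z :=
  (ENNReal.tsum_le_tsum fun y : {y // P y} =>
    ENNReal.tsum_comp_le_tsum_of_injective Subtype.val_injective (f y.1)).trans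
    (ENNReal.tsum_comp_le_tsum_of_injective Subtype.val_injective fun y => ∑' z, f y z)

lemma tsum_bond_le {a : ℝ} {X Y Z : (Fin d → ℤ) → Prop} {E : (Fin d → ℤ) → ℝ≥0∞}
    {e T : ℝ≥0∞} (hE : ∀ y, Y y → E y ≤ e) (v : Fin d → ℤ)
    (hT : ∀ x, ∑' y, ∑' z, latPow (y - x) a * latPow (x - z) a * latPow (z + v - y) a ≤ T) :
    ∑' x : {x // X x}, ∑' y : {y // Y y}, ∑' z : {z // Z z},
      latPow x.1 a * latPow (y.1 - x.1) a * latPow (x.1 - z.1) a * latPow (z.1 + v - y.1) a *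
        E y.1 ≤ (∑' x : {x // X x}, latPow x.1 a) * e * T := by
  rw [mul_assoc, ← ENNReal.tsum_mul_right]
  refine ENNReal.tsum_le_tsum fun x => ?_
  set F := fun y z => latPow (y - x.1) a * latPow (x.1 - z) a * latPow (z + v - y) a
  calc _ ≤ ∑' y : {y // Y y}, ∑' z : {z // Z z}, latPow x.1 a * e * F y.1 z.1 :=
      ENNReal.tsum_le_tsum fun y => ENNReal.tsum_le_tsum fun z =>
        (mul_le_mul_right (hE y.1 y.2) _).trans_eq (by simp only [F]; ring)
    _ ≤ ∑' y, ∑' z, latPow x.1 a * e * F y z :=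
      tsum_subtype_tsum_subtype_le fun y z => latPow x.1 a * e * F y z
    _ = latPow x.1 a * e * ∑' y, ∑' z, F y z := by simp_rw [ENNReal.tsum_mul_left]
    _ ≤ latPow x.1 a * e * T := by gcongr; exact hT x.1
    _ = latPow x.1 a * (e * T) := mul_assoc _ _ _

lemma exists_forall_ge_rpow_le {s : ℝ} (hs : s < 0) {ε : ℝ} (hε : 0 < ε) :
    ∃ K ≥ 1, ∀ t ≥ K, t ^ s ≤ ε := by
  have h := tendsto_rpow_neg_atTop (neg_pos.2 hs)
  rw [neg_neg] at h
  obtain ⟨K, hK⟩ := Filter.eventually_atTop.1 ((tendsto_order.1 h).2 ε hε)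
  exact ⟨max K 1, le_max_right _ _, fun t ht => (hK t (le_of_max_le_left ht)).le⟩

end Assembly

theorem statement7 (d : ℕ) (hd : 6 < d) :
    ∃ C : ℝ, 0 < C ∧ ∀ ε : ℝ, 0 < ε → ∃ K : ℝ, 1 ≤ K ∧
      ∀ α : ℝ, 0 < α → α < 1 / 3 → ∀ r : ℕ, 1 ≤ r → ∀ v : Fin d → ℤ, K ≤ ‖v‖ →
      ∑' x : {x : Fin d → ℤ // ‖x‖ ≤ α * r},
      ∑' y : {y : Fin d → ℤ // ‖y‖ ≤ α * r},
      ∑' z : {z : Fin d → ℤ // ‖z‖ ≤ α ^ 2 * r},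
        latPow x.1 ((2 : ℝ) - d) * latPow (y.1 - x.1) ((2 : ℝ) - d) *
          latPow (x.1 - z.1) ((2 : ℝ) - d) * latPow (z.1 + v - y.1) ((2 : ℝ) - d) *
          ENNReal.ofReal (((r : ℝ) - ‖y.1‖) ^ (-2 : ℝ)) ≤
        ENNReal.ofReal (C * α ^ 2 * ε) := by
  have hd' : (6 : ℝ) < d := by exact_mod_cast hd
  obtain ⟨C₁, hC₁, hball⟩ := exists_tsum_latPow_ball_le (d := d) two_pos (by linarith)
  obtain ⟨C₂, hC₂, htri⟩ := exists_tsum_tsum_latPow_triangle_le (d := d) (a := 2 - d)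
    (b := 2 - d) (c := 2 - d) (by linarith) (by linarith) (by linarith) (by linarith)
  rw [show (2 : ℝ) * d + (2 - d) + (2 - d) + (2 - d) = 6 - d by ring] at htri
  refine ⟨9 / 4 * C₁ * C₂, by positivity, fun ε hε => ?_⟩
  obtain ⟨K, hK₁, hK⟩ := exists_forall_ge_rpow_le (s := 6 - d) (by linarith) hε
  refine ⟨K, hK₁, fun α hα hα₃ r hr v hv => ?_⟩
  have hr₀ : (0 : ℝ) < r := by exact_mod_cast hr
  have hboundary : ∀ y : Fin d → ℤ, ‖y‖ ≤ α * r →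
      ENNReal.ofReal ((r - ‖y‖) ^ (-2 : ℝ)) ≤ ENNReal.ofReal ((2 * r / 3) ^ (-2 : ℝ)) :=
    fun y hy => ENNReal.ofReal_le_ofReal <|
      Real.rpow_le_rpow_of_nonpos (by positivity) (by nlinarith) (by norm_num)
  have hv' : bracketPow v (6 - d) ≤ ENNReal.ofReal ε :=
    ENNReal.ofReal_le_ofReal (hK _ (hv.trans (le_bracket v)))
  calc _ ≤ (∑' x : {x : Fin d → ℤ // ‖x‖ ≤ α * r}, latPow x.1 (2 - d)) *
        ENNReal.ofReal ((2 * r / 3) ^ (-2 : ℝ)) * (ENNReal.ofReal C₂ * ENNReal.ofReal ε) :=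
      tsum_bond_le hboundary v fun x => (htri x v).trans (by gcongr)
    _ ≤ ENNReal.ofReal (C₁ * (α * r) ^ (2 : ℝ)) * ENNReal.ofReal ((2 * r / 3) ^ (-2 : ℝ)) *
        (ENNReal.ofReal C₂ * ENNReal.ofReal ε) := by gcongr; exact hball _
    _ = ENNReal.ofReal (9 / 4 * C₁ * C₂ * α ^ 2 * ε) := by
      rw [← ENNReal.ofReal_mul (by positivity), ← ENNReal.ofReal_mul hC₂.le,
        ← ENNReal.ofReal_mul (by positivity), Real.rpow_neg (by positivity), Real.rpow_two,
        Real.rpow_two]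
      congr 1
      field_simp
      ring
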